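/- arXiv:1811.09623 — 4 statements merged into one kernel-verified Lean document; each statement's English description precedes it below -/
import Mathlib

section
/- Let G ∈ ℝ^{N×n} and f ∈ ℝ^N. Suppose λ* ∈ ℝ^N minimizes the quadratic function λ ↦ (1/2) λᵀ G Gᵀ λ − fᵀ λ over the probability simplex Δ_N = { λ ∈ ℝ^N : λ_i ≥ 0 for all i, Σ_{i=1}^N λ_i = 1 }. Then d* = −Gᵀ λ* minimizes over all d ∈ ℝ^n the function ψ(d) = max_{1≤j≤N} ( f_j + ⟨G_j, d⟩ ) + (1/2)‖d‖², where G_j denotes the j-th row of G; equivalently, the pair (d*, a*) with a* = max_{1≤j≤N} ( f_j + ⟨G_j, d*⟩ ) minimizes (1/2)‖d‖² + a over all (d, a) ∈ ℝ^n × ℝ subject to the constraints f_j + ⟨G_j, d⟩ ≤ a for every 1 ≤ j ≤ N. -/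
open Finset

private lemma key_scalar (B C : ℝ) (hC : 0 ≤ C)
    (h : ∀ t : ℝ, 0 ≤ t → t ≤ 1 → 0 ≤ t * B + t ^ 2 / 2 * C) : 0 ≤ B := by
  by_contra hB
  push_neg at hB
  rcases le_or_gt C (-B) with h1 | h1
  · have := h 1 zero_le_one le_rfl
    nlinarith
  · have hCpos : 0 < C := by linarith
    have ht := h (-B / C) (div_nonneg (by linarith) hCpos.le) (by
      rw [div_le_one hCpos]; linarith)
    have heq : (-B / C) * B + (-B / C) ^ 2 / 2 * C = -(B ^ 2 / (2 * C)) := by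
      field_simp; ring
    rw [heq] at ht
    have hBne : B ≠ 0 := ne_of_lt hB
    have hpos2 : 0 < B ^ 2 / (2 * C) := by positivity
    linarith

private lemma quadeq {N n : ℕ} (G : Matrix (Fin N) (Fin n) ℝ) (μ : Fin N → ℝ) :
    ∑ i, ∑ j, μ i * (∑ k, G i k * G j k) * μ j = ∑ k, (∑ i, G i k * μ i) ^ 2 := by
  have h1 : ∀ i j : Fin N, μ i * (∑ k, G i k * G j k) * μ j
      = ∑ k, μ i * (G i k * G j k) * μ j := by
    intro i j; rw [Finset.mul_sum, Finset.sum_mul]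
  have h2 : ∀ k : Fin n, (∑ i, G i k * μ i) ^ 2
      = ∑ i, ∑ j, μ i * (G i k * G j k) * μ j := by
    intro k
    rw [sq, Finset.sum_mul_sum]
    exact Finset.sum_congr rfl fun i _ => Finset.sum_congr rfl fun j _ => by ring
  calc ∑ i, ∑ j, μ i * (∑ k, G i k * G j k) * μ j
      = ∑ i, ∑ j, ∑ k, μ i * (G i k * G j k) * μ j :=
        Finset.sum_congr rfl fun i _ => Finset.sum_congr rfl fun j _ => h1 i j
    _ = ∑ i, ∑ k, ∑ j, μ i * (G i k * G j k) * μ j :=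
        Finset.sum_congr rfl fun i _ => Finset.sum_comm
    _ = ∑ k, ∑ i, ∑ j, μ i * (G i k * G j k) * μ j := Finset.sum_comm
    _ = ∑ k, (∑ i, G i k * μ i) ^ 2 :=
        Finset.sum_congr rfl fun k _ => (h2 k).symm

private lemma expand_sum {n : ℕ} (A w : Fin n → ℝ) (t : ℝ) :
    ∑ k, ((1 - t) * A k + t * w k) ^ 2 =
      ∑ k, (A k) ^ 2 + t * (2 * ∑ k, A k * (w k - A k)) + t ^ 2 * ∑ k, (w k - A k) ^ 2 := by
  rw [Finset.mul_sum, Finset.mul_sum, Finset.mul_sum, ← Finset.sum_add_distrib,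
    ← Finset.sum_add_distrib]
  exact Finset.sum_congr rfl fun k _ => by ring

/-- If `lam` minimizes the dual QP `(1/2) λᵀGGᵀλ − fᵀλ` over the probability simplex, then
`d* = −Gᵀλ` minimizes `ψ(d) = maxⱼ (fⱼ + ⟨Gⱼ, d⟩) + (1/2)‖d‖²`; equivalently, the pair
`(d*, a*)` with `a* = maxⱼ (fⱼ + ⟨Gⱼ, d*⟩)` minimizes `(1/2)‖d‖² + a` subject to
`fⱼ + ⟨Gⱼ, d⟩ ≤ a` for all `j`. -/
theorem dual_qp_solves_primal
    (N n : ℕ) [NeZero N] (G : Matrix (Fin N) (Fin n) ℝ) (f : Fin N → ℝ)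
    (lam : Fin N → ℝ) (hpos : ∀ i, 0 ≤ lam i) (hsum : ∑ i, lam i = 1)
    (hmin : ∀ μ : Fin N → ℝ, (∀ i, 0 ≤ μ i) → ∑ i, μ i = 1 →
      (1 / 2) * (∑ i, ∑ j, lam i * (∑ k, G i k * G j k) * lam j) - ∑ i, f i * lam i ≤
      (1 / 2) * (∑ i, ∑ j, μ i * (∑ k, G i k * G j k) * μ j) - ∑ i, f i * μ i) :
    -- d* = −Gᵀλ
    (∀ d : Fin n → ℝ,
        Finset.univ.sup' Finset.univ_nonempty
            (fun j => f j + ∑ k, G j k * (-(∑ i, G i k * lam i))) +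
          (1 / 2) * (∑ k, (-(∑ i, G i k * lam i)) ^ 2) ≤
        Finset.univ.sup' Finset.univ_nonempty (fun j => f j + ∑ k, G j k * d k) +
          (1 / 2) * (∑ k, (d k) ^ 2)) ∧
    (∀ (d : Fin n → ℝ) (a : ℝ), (∀ j, f j + ∑ k, G j k * d k ≤ a) →
        (1 / 2) * (∑ k, (-(∑ i, G i k * lam i)) ^ 2) +
          Finset.univ.sup' Finset.univ_nonempty
            (fun j => f j + ∑ k, G j k * (-(∑ i, G i k * lam i))) ≤
        (1 / 2) * (∑ k, (d k) ^ 2) + a) := by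
  set A : Fin n → ℝ := fun k => ∑ i, G i k * lam i with hA
  set F : ℝ := ∑ i, f i * lam i with hF
  set S : ℝ := ∑ k, (A k) ^ 2 with hS
  have hAk : ∀ k, (∑ i, G i k * lam i) = A k := fun k => rfl
  -- rewrite hmin via quadeq
  have hmin' : ∀ μ : Fin N → ℝ, (∀ i, 0 ≤ μ i) → ∑ i, μ i = 1 →
      (1 / 2) * S - F ≤ (1 / 2) * (∑ k, (∑ i, G i k * μ i) ^ 2) - ∑ i, f i * μ i := by
    intro μ h1 h2
    have := hmin μ h1 h2
    rwa [quadeq, quadeq] at this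
  -- variational inequality
  have vi : ∀ j₀ : Fin N, f j₀ + ∑ k, G j₀ k * (-(A k)) ≤ F - S := by
    intro j₀
    have hB : 0 ≤ (F - f j₀ + ∑ k, A k * (G j₀ k - A k)) := by
      apply key_scalar _ (∑ k, (G j₀ k - A k) ^ 2)
        (Finset.sum_nonneg fun k _ => sq_nonneg _)
      intro t ht0 ht1
      set μ : Fin N → ℝ := fun i => (1 - t) * lam i + t * (if i = j₀ then 1 else 0) with hμ
      have hμpos : ∀ i, 0 ≤ μ i := by
        intro i
        have e1 : (0:ℝ) ≤ (if i = j₀ then (1:ℝ) else 0) := by positivity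
        have e2 := hpos i
        simp only [hμ]
        nlinarith
      have hμsum : ∑ i, μ i = 1 := by
        simp only [hμ]
        rw [Finset.sum_add_distrib, ← Finset.mul_sum, ← Finset.mul_sum, hsum,
          Finset.sum_ite_eq' Finset.univ j₀ (fun _ => (1:ℝ))]
        simp
      have h1 : ∀ k, ∑ i, G i k * μ i = (1 - t) * A k + t * G j₀ k := by
        intro k
        simp only [hμ, mul_add, Finset.sum_add_distrib]
        congr 1
        · rw [Finset.mul_sum]
          exact Finset.sum_congr rfl fun i _ => by ring
        · have e : ∀ i, G i k * (t * if i = j₀ then 1 else 0)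
              = if i = j₀ then t * G i k else 0 := by
            intro i; by_cases h : i = j₀ <;> simp [h, mul_comm]
          rw [Finset.sum_congr rfl fun i _ => e i,
            Finset.sum_ite_eq' Finset.univ j₀ (fun i => t * G i k)]
          simp
      have h2 : ∑ i, f i * μ i = (1 - t) * F + t * f j₀ := by
        simp only [hμ, mul_add, Finset.sum_add_distrib]
        congr 1
        · rw [hF, Finset.mul_sum]
          exact Finset.sum_congr rfl fun i _ => by ring
        · have e : ∀ i, f i * (t * if i = j₀ then 1 else 0)
              = if i = j₀ then t * f i else 0 := by
            intro i; by_cases h : i = j₀ <;> simp [h, mul_comm]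
          rw [Finset.sum_congr rfl fun i _ => e i,
            Finset.sum_ite_eq' Finset.univ j₀ (fun i => t * f i)]
          simp
      have key := hmin' μ hμpos hμsum
      rw [h2] at key
      have h3 : (∑ k, (∑ i, G i k * μ i) ^ 2) =
          S + t * (2 * ∑ k, A k * (G j₀ k - A k)) + t ^ 2 * ∑ k, (G j₀ k - A k) ^ 2 := by
        rw [Finset.sum_congr rfl fun k _ => by rw [h1 k]]
        exact expand_sum A (fun k => G j₀ k) t
      rw [h3] at key
      nlinarith [key]
    have heq : ∑ k, G j₀ k * (-(A k)) = -∑ k, A k * G j₀ k := by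
      rw [← Finset.sum_neg_distrib]
      exact Finset.sum_congr rfl fun k _ => by ring
    have hsplit : ∑ k, A k * (G j₀ k - A k) = (∑ k, A k * G j₀ k) - S := by
      rw [hS, ← Finset.sum_sub_distrib]
      exact Finset.sum_congr rfl fun k _ => by ring
    rw [hsplit] at hB
    rw [heq]
    linarith
  -- weighted average equals F - S
  have havg : ∑ j, lam j * (f j + ∑ k, G j k * (-(A k))) = F - S := by
    have e1 : ∀ j, lam j * (f j + ∑ k, G j k * (-(A k)))
        = f j * lam j + ∑ k, -(G j k * lam j * A k) := by
      intro j
      rw [mul_add, Finset.mul_sum]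
      congr 1
      · ring
      · exact Finset.sum_congr rfl fun k _ => by ring
    rw [Finset.sum_congr rfl fun j _ => e1 j, Finset.sum_add_distrib, ← hF,
      Finset.sum_comm]
    have e2 : ∀ k : Fin n, ∑ j, -(G j k * lam j * A k) = -((A k) ^ 2) := by
      intro k
      rw [Finset.sum_neg_distrib, ← Finset.sum_mul, hAk k, sq]
    rw [Finset.sum_congr rfl fun k _ => e2 k, Finset.sum_neg_distrib, ← hS]
    ring
  have hsup : Finset.univ.sup' Finset.univ_nonempty
      (fun j => f j + ∑ k, G j k * (-(A k))) = F - S := by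
    apply le_antisymm
    · exact Finset.sup'_le _ _ fun j _ => vi j
    · rw [← havg]
      calc ∑ j, lam j * (f j + ∑ k, G j k * (-(A k)))
          ≤ ∑ j, lam j * (Finset.univ.sup' Finset.univ_nonempty
              (fun j => f j + ∑ k, G j k * (-(A k)))) := by
            refine Finset.sum_le_sum fun j _ => ?_
            exact mul_le_mul_of_nonneg_left
              (Finset.le_sup' (fun j => f j + ∑ k, G j k * (-(A k))) (Finset.mem_univ j)) (hpos j)
        _ = Finset.univ.sup' Finset.univ_nonempty
              (fun j => f j + ∑ k, G j k * (-(A k))) := by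
            rw [← Finset.sum_mul, hsum, one_mul]
  have hnegsq : ∑ k, (-(A k)) ^ 2 = S := by
    rw [hS]; exact Finset.sum_congr rfl fun k _ => by ring
  -- second conjunct proved first
  have second : ∀ (d : Fin n → ℝ) (a : ℝ), (∀ j, f j + ∑ k, G j k * d k ≤ a) →
      (1 / 2) * (∑ k, (-(A k)) ^ 2) +
        Finset.univ.sup' Finset.univ_nonempty
          (fun j => f j + ∑ k, G j k * (-(A k))) ≤
      (1 / 2) * (∑ k, (d k) ^ 2) + a := by
    intro d a ha
    rw [hnegsq, hsup]
    have havgd : ∑ j, lam j * (f j + ∑ k, G j k * d k) = F + ∑ k, A k * d k := by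
      have e1 : ∀ j, lam j * (f j + ∑ k, G j k * d k)
          = f j * lam j + ∑ k, G j k * lam j * d k := by
        intro j
        rw [mul_add, Finset.mul_sum]
        congr 1
        · ring
        · exact Finset.sum_congr rfl fun k _ => by ring
      rw [Finset.sum_congr rfl fun j _ => e1 j, Finset.sum_add_distrib, ← hF,
        Finset.sum_comm]
      congr 1
      refine Finset.sum_congr rfl fun k _ => ?_
      rw [← hAk k, Finset.sum_mul]
    have h1 : F + ∑ k, A k * d k ≤ a := by
      rw [← havgd]
      calc ∑ j, lam j * (f j + ∑ k, G j k * d k) ≤ ∑ j, lam j * a :=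
            Finset.sum_le_sum fun j _ => mul_le_mul_of_nonneg_left (ha j) (hpos j)
        _ = a := by rw [← Finset.sum_mul, hsum, one_mul]
    have h2 : (0:ℝ) ≤ ∑ k, (d k + A k) ^ 2 := Finset.sum_nonneg fun k _ => sq_nonneg _
    have h3 : ∑ k, (d k + A k) ^ 2 = ∑ k, (d k) ^ 2 + 2 * (∑ k, A k * d k) + S := by
      rw [hS, Finset.mul_sum, ← Finset.sum_add_distrib, ← Finset.sum_add_distrib]
      exact Finset.sum_congr rfl fun k _ => by ring
    rw [h3] at h2
    linarith
  refine ⟨fun d => ?_, second⟩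
  have hfeas : ∀ j, f j + ∑ k, G j k * d k ≤
      Finset.univ.sup' Finset.univ_nonempty (fun j => f j + ∑ k, G j k * d k) :=
    fun j => Finset.le_sup' (fun j => f j + ∑ k, G j k * d k) (Finset.mem_univ j)
  have := second d (Finset.univ.sup' Finset.univ_nonempty
    (fun j => f j + ∑ k, G j k * d k)) hfeas
  linarith
end

section
/- Let f_1, …, f_N : ℝ^n → ℝ be differentiable functions and define Φ(u) = max_{1≤j≤N} f_j(u). Fix u ∈ ℝ^n and suppose d ∈ ℝ^n minimizes over ℝ^n the function ψ(v) = max_{1≤j≤N} { f_j(u) + ⟨∇f_j(u), v⟩ } + (1/2)‖v‖². If d ≠ 0, then there exists t₀ > 0 such that Φ(u + t d) < Φ(u) for all t ∈ (0, t₀). -/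
open Filter Finset
open scoped RealInnerProductSpace Topology

/-
Taking `v = 0` in the minimality of `d` gives `fⱼ(u) + ⟨∇fⱼ(u), d⟩ ≤ Φ(u) - ‖d‖²/2 < Φ(u)`.
So the derivative of `t ↦ fⱼ(u + t d)` at `0` is below `Φ(u) - fⱼ(u) ≥ 0`, and for small
`t ∈ (0, 1)` the function stays below `fⱼ(u) + t (Φ(u) - fⱼ(u)) ≤ Φ(u)`; finitely many such
conditions hold simultaneously.
-/

theorem HasDerivWithinAt.eventually_nhdsGT_lt {φ : ℝ → ℝ} {c x M : ℝ}
    (hφ : HasDerivWithinAt φ c (Set.Ioi x) x) (hle : φ x ≤ M) (hlt : φ x + c < M) :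
    ∀ᶠ t in 𝓝[>] x, φ t < M := by
  have hslope : ∀ᶠ t in 𝓝[>] x, slope φ x t < M - φ x :=
    hφ.limsup_slope_le' (lt_irrefl x) (by linarith)
  have hnear : ∀ᶠ t in 𝓝[>] x, t < x + 1 :=
    nhdsWithin_le_nhds (eventually_lt_nhds (lt_add_one x))
  filter_upwards [hslope, hnear, self_mem_nhdsWithin] with t hst hnear_t (hxt : x < t)
  rw [slope_def_field, div_lt_iff₀ (sub_pos.mpr hxt)] at hst
  nlinarith

theorem Finset.eventually_sup'_lt_sup'_of_hasDerivWithinAt {ι : Type*} {s : Finset ι}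
    (hs : s.Nonempty) {φ : ι → ℝ → ℝ} {c : ι → ℝ} {x : ℝ}
    (hφ : ∀ j ∈ s, HasDerivWithinAt (φ j) (c j) (Set.Ioi x) x)
    (hmodel : s.sup' hs (fun j => φ j x + c j) < s.sup' hs (fun j => φ j x)) :
    ∀ᶠ t in 𝓝[>] x, s.sup' hs (fun j => φ j t) < s.sup' hs (fun j => φ j x) := by
  have heach : ∀ j ∈ s, ∀ᶠ t in 𝓝[>] x, φ j t < s.sup' hs (fun j => φ j x) := fun j hj =>
    (hφ j hj).eventually_nhdsGT_lt (s.le_sup' (fun j => φ j x) hj)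
      ((s.le_sup' (fun j => φ j x + c j) hj).trans_lt hmodel)
  filter_upwards [(eventually_all_finset s).mpr heach] with t ht
  exact (s.sup'_lt_iff hs).mpr ht

theorem DifferentiableAt.hasDerivAt_comp_add_smul {E : Type*} [NormedAddCommGroup E]
    [InnerProductSpace ℝ E] [CompleteSpace E] {f : E → ℝ} {u : E} (hf : DifferentiableAt ℝ f u)
    (d : E) : HasDerivAt (fun t : ℝ => f (u + t • d)) ⟪gradient f u, d⟫ 0 := by
  simpa [HasLineDerivAt] using hf.hasGradientAt.hasFDerivAt.hasLineDerivAt d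

/-- If `d ≠ 0` minimizes `ψ(v) = maxⱼ {fⱼ(u) + ⟨∇fⱼ(u), v⟩} + (1/2)‖v‖²`, then `d` is a descent
direction for `Φ(u) = maxⱼ fⱼ(u)`: there is `t₀ > 0` with `Φ(u + t d) < Φ(u)` for `t ∈ (0, t₀)`. -/
theorem descent_direction
    (N n : ℕ) [NeZero N] (f : Fin N → EuclideanSpace ℝ (Fin n) → ℝ)
    (hf : ∀ j, Differentiable ℝ (f j))
    (u d : EuclideanSpace ℝ (Fin n))
    (hmin : ∀ v : EuclideanSpace ℝ (Fin n),
      Finset.univ.sup' Finset.univ_nonempty (fun j => f j u + ⟪gradient (f j) u, d⟫) +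
          (1 / 2) * ‖d‖ ^ 2 ≤
        Finset.univ.sup' Finset.univ_nonempty (fun j => f j u + ⟪gradient (f j) u, v⟫) +
          (1 / 2) * ‖v‖ ^ 2)
    (hd : d ≠ 0) :
    ∃ t₀ > (0 : ℝ), ∀ t ∈ Set.Ioo (0 : ℝ) t₀,
      Finset.univ.sup' Finset.univ_nonempty (fun j => f j (u + t • d)) <
        Finset.univ.sup' Finset.univ_nonempty (fun j => f j u) := by
  have hmodel : univ.sup' univ_nonempty (fun j => f j u + ⟪gradient (f j) u, d⟫) <
      univ.sup' univ_nonempty (fun j => f j u) := by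
    have h0 := hmin 0
    simp only [inner_zero_right, add_zero, norm_zero] at h0
    have : 0 < ‖d‖ := norm_pos_iff.mpr hd
    nlinarith
  have hline : ∀ j ∈ (univ : Finset (Fin N)), HasDerivWithinAt (fun t : ℝ => f j (u + t • d))
      ⟪gradient (f j) u, d⟫ (Set.Ioi 0) 0 := fun j _ =>
    ((hf j u).hasDerivAt_comp_add_smul d).hasDerivWithinAt
  have hdescent := univ.eventually_sup'_lt_sup'_of_hasDerivWithinAt univ_nonempty hline
  simp only [zero_smul, add_zero] at hdescent
  obtain ⟨t₀, ht₀, hsub⟩ := mem_nhdsGT_iff_exists_Ioo_subset.mp (hdescent hmodel)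
  exact ⟨t₀, ht₀, fun t ht => hsub ht⟩
end

section
/- Let f_1, …, f_N : ℝ^n → ℝ be differentiable functions and define Φ(u) = max_{1≤j≤N} f_j(u). Fix u ∈ ℝ^n and let Θ = { j : f_j(u) = Φ(u) } be the active index set at u. Suppose d = 0 minimizes over ℝ^n the function ψ(v) = max_{1≤j≤N} { f_j(u) + ⟨∇f_j(u), v⟩ } + (1/2)‖v‖², i.e., max_{1≤j≤N} { f_j(u) + ⟨∇f_j(u), v⟩ } + (1/2)‖v‖² ≥ Φ(u) for all v ∈ ℝ^n. Then u is a stationary point of Φ: for every direction d₁ ∈ ℝ^n, max_{j∈Θ} ⟨∇f_j(u), d₁⟩ ≥ 0. -/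
/-!
If some direction `d` had `⟪∇fⱼ(u), d⟫ < 0` for every active index `j`, then for small `t > 0`
every piece `fⱼ(u) + t ⟪∇fⱼ(u), d⟫ + (t² / 2) ‖d‖²` of the model at `v = t • d` drops strictly
below `Φ(u)`: for active pieces the negative first-order term beats the quadratic one, and the
inactive pieces start strictly below `Φ(u)` and move continuously in `t`. This contradicts the
minimality of `v = 0`.
-/

open Finset Filter Topology
open scoped RealInnerProductSpace Classical

theorem eventually_nhdsGT_add_mul_add_mul_sq_lt {a c q M : ℝ} (ha : a ≤ M) (hc : a = M → c < 0) :
    ∀ᶠ t in 𝓝[>] 0, a + t * c + q * t ^ 2 < M := by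
  rcases ha.lt_or_eq with ha | rfl
  · have hcont : Tendsto (fun t : ℝ => a + t * c + q * t ^ 2) (𝓝 0) (𝓝 a) := by
      have : Continuous fun t : ℝ => a + t * c + q * t ^ 2 := by fun_prop
      simpa using this.tendsto 0
    exact (hcont.eventually (gt_mem_nhds ha)).filter_mono nhdsWithin_le_nhds
  · have hslope : ∀ᶠ t in 𝓝 (0 : ℝ), c + q * t < 0 := by
      have : Continuous fun t : ℝ => c + q * t := by fun_prop
      exact this.tendsto 0 |>.eventually (gt_mem_nhds (by simpa using hc rfl))
    filter_upwards [self_mem_nhdsWithin, nhdsWithin_le_nhds hslope] with t (ht : 0 < t) hneg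
    nlinarith [mul_neg_of_pos_of_neg ht hneg]

theorem exists_active_inner_nonneg_of_forall_le_model {E ι : Type*} [NormedAddCommGroup E]
    [InnerProductSpace ℝ E] [Fintype ι] [Nonempty ι] (a : ι → ℝ) (g : ι → E)
    (hmin : ∀ v : E, univ.sup' univ_nonempty a ≤
      univ.sup' univ_nonempty (fun j => a j + ⟪g j, v⟫) + 1 / 2 * ‖v‖ ^ 2)
    (d : E) : ∃ j, a j = univ.sup' univ_nonempty a ∧ 0 ≤ ⟪g j, d⟫ := by
  by_contra! hdescent
  set M := univ.sup' univ_nonempty a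
  have hpieces : ∀ᶠ t in 𝓝[>] 0, ∀ j, a j + t * ⟪g j, d⟫ + 1 / 2 * ‖d‖ ^ 2 * t ^ 2 < M :=
    eventually_all.2 fun j =>
      eventually_nhdsGT_add_mul_add_mul_sq_lt (le_sup' a (mem_univ j)) (hdescent j)
  obtain ⟨t, hpieces_t, ht⟩ := (hpieces.and self_mem_nhdsWithin).exists
  have hmodel : univ.sup' univ_nonempty (fun j => a j + ⟪g j, t • d⟫) < M - 1 / 2 * ‖t • d‖ ^ 2 := by
    refine (sup'_lt_iff _).2 fun j _ => ?_
    have := hpieces_t j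
    rw [real_inner_smul_right, norm_smul, Real.norm_of_nonneg ht.le]
    linarith
  linarith [hmin (t • d)]

/-- If `d = 0` minimizes `ψ(v) = maxⱼ {fⱼ(u) + ⟨∇fⱼ(u), v⟩} + (1/2)‖v‖²`, i.e. the value of `ψ`
at any `v` is at least `Φ(u) = maxⱼ fⱼ(u)`, then `u` is a stationary point of `Φ`: for every
direction `d₁`, `max_{j ∈ Θ} ⟨∇fⱼ(u), d₁⟩ ≥ 0`, where `Θ` is the active index set at `u`. -/
theorem stationary_point_of_zero_direction
    (N n : ℕ) [NeZero N] (f : Fin N → EuclideanSpace ℝ (Fin n) → ℝ)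
    (u : EuclideanSpace ℝ (Fin n))
    (hmin : ∀ v : EuclideanSpace ℝ (Fin n),
      Finset.univ.sup' Finset.univ_nonempty (fun j => f j u) ≤
        Finset.univ.sup' Finset.univ_nonempty (fun j => f j u + ⟪gradient (f j) u, v⟫) +
          (1 / 2) * ‖v‖ ^ 2) :
    ∀ d₁ : EuclideanSpace ℝ (Fin n),
      0 ≤ (Finset.univ.filter
            (fun j => f j u = Finset.univ.sup' Finset.univ_nonempty (fun i => f i u))).sup'
          (by
            obtain ⟨j, hj, hje⟩ :=
              Finset.exists_mem_eq_sup' (Finset.univ_nonempty (α := Fin N)) (fun i => f i u)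
            exact ⟨j, Finset.mem_filter.mpr ⟨hj, hje.symm⟩⟩)
          (fun j => ⟪gradient (f j) u, d₁⟫) := by
  intro d₁
  obtain ⟨j, hj_active, hj_nonneg⟩ :=
    exists_active_inner_nonneg_of_forall_le_model _ (fun j => gradient (f j) u) hmin d₁
  exact hj_nonneg.trans (le_sup' (fun j => ⟪gradient (f j) u, d₁⟫) (by simpa using hj_active))
end

section
/- Let f_1, …, f_N : ℝ^n → ℝ be differentiable functions and define Φ(u) = max_{1≤j≤N} f_j(u). Fix u, d ∈ ℝ^n and suppose max_{1≤j≤N} { f_j(u) + ⟨∇f_j(u), d⟩ } − Φ(u) ≤ −(1/2)‖d‖². Then limsup_{t→0+} (Φ(u + t d) − Φ(u))/t ≤ −(1/2)‖d‖². -/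
open Finset Filter
open scoped RealInnerProductSpace Topology

/-- Directional derivative limit along `t → 0⁺`. -/
lemma dir_deriv_tendsto {n : ℕ} (f : EuclideanSpace ℝ (Fin n) → ℝ)
    (hf : Differentiable ℝ f) (u d : EuclideanSpace ℝ (Fin n)) :
    Tendsto (fun t : ℝ => (f (u + t • d) - f u) / t) (𝓝[>] (0:ℝ))
      (𝓝 ⟪gradient f u, d⟫) := by
  have hline : HasDerivAt (fun t : ℝ => u + t • d) d 0 := by
    simpa using ((hasDerivAt_id (0:ℝ)).smul_const d).const_add u
  have h0 : u + (0:ℝ) • d = u := by simp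
  have hF : HasFDerivAt f (fderiv ℝ f u) (u + (0:ℝ) • d) := by
    rw [h0]; exact (hf u).hasFDerivAt
  have hg : HasDerivAt (fun t : ℝ => f (u + t • d)) (fderiv ℝ f u d) 0 :=
    hF.comp_hasDerivAt 0 hline
  have hslope := hasDerivAt_iff_tendsto_slope.mp hg
  have hmono : (𝓝[>] (0:ℝ)) ≤ 𝓝[≠] (0:ℝ) :=
    nhdsWithin_mono _ (fun x hx => ne_of_gt hx)
  have h1 : Tendsto (slope (fun t : ℝ => f (u + t • d)) 0) (𝓝[>] (0:ℝ))
      (𝓝 (fderiv ℝ f u d)) := hslope.mono_left hmono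
  have heq : ⟪gradient f u, d⟫ = fderiv ℝ f u d := by
    rw [← InnerProductSpace.toDual_apply_apply, gradient,
      (InnerProductSpace.toDual ℝ (EuclideanSpace ℝ (Fin n))).apply_symm_apply]
  rw [heq]
  refine h1.congr' ?_
  filter_upwards [self_mem_nhdsWithin] with t ht
  simp [slope_def_field, h0, div_eq_inv_mul]

/-- If `maxⱼ {fⱼ(u) + ⟨∇fⱼ(u), d⟩} − Φ(u) ≤ −(1/2)‖d‖²`, then
`limsup_{t→0⁺} (Φ(u + t d) − Φ(u))/t ≤ −(1/2)‖d‖²` where `Φ(u) = maxⱼ fⱼ(u)`. -/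
theorem limsup_dir_quotient_le
    (N n : ℕ) [NeZero N] (f : Fin N → EuclideanSpace ℝ (Fin n) → ℝ)
    (hf : ∀ j, Differentiable ℝ (f j))
    (u d : EuclideanSpace ℝ (Fin n))
    (h : Finset.univ.sup' Finset.univ_nonempty (fun j => f j u + ⟪gradient (f j) u, d⟫) -
        Finset.univ.sup' Finset.univ_nonempty (fun j => f j u) ≤ -((1 / 2) * ‖d‖ ^ 2)) :
    Filter.limsup
        (fun t : ℝ =>
          (Finset.univ.sup' Finset.univ_nonempty (fun j => f j (u + t • d)) -
              Finset.univ.sup' Finset.univ_nonempty (fun j => f j u)) / t)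
        (𝓝[>] (0 : ℝ)) ≤ -((1 / 2) * ‖d‖ ^ 2) := by
  set c : ℝ := (1 / 2) * ‖d‖ ^ 2 with hc
  set Φu : ℝ := Finset.univ.sup' Finset.univ_nonempty (fun j => f j u) with hΦu
  set F : ℝ → ℝ := fun t =>
    (Finset.univ.sup' Finset.univ_nonempty (fun j => f j (u + t • d)) - Φu) / t with hF
  -- coboundedness: F is eventually bounded below
  obtain ⟨j0, -, hj0⟩ := Finset.exists_mem_eq_sup' (Finset.univ_nonempty (α := Fin N))
    (fun j => f j u)
  have hlow : ∀ᶠ t in 𝓝[>] (0:ℝ), (f j0 (u + t • d) - f j0 u) / t ≤ F t := by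
    filter_upwards [self_mem_nhdsWithin] with t ht
    have ht : (0:ℝ) < t := ht
    apply div_le_div_of_nonneg_right ?_ ht.le |>.trans_eq rfl
    have : f j0 (u + t • d) ≤ Finset.univ.sup' Finset.univ_nonempty
        (fun j => f j (u + t • d)) :=
      Finset.le_sup' (fun j => f j (u + t • d)) (Finset.mem_univ j0)
    have hj0' : Φu = f j0 u := hj0
    linarith
  have hcb : IsCoboundedUnder (· ≤ ·) (𝓝[>] (0:ℝ)) F := by
    have htd := dir_deriv_tendsto (f j0) (hf j0) u d
    have hb : ∀ᶠ t in 𝓝[>] (0:ℝ), ⟪gradient (f j0) u, d⟫ - 1 ≤ F t := by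
      filter_upwards [hlow, htd.eventually (eventually_gt_nhds (by linarith : 
        ⟪gradient (f j0) u, d⟫ - 1 < ⟪gradient (f j0) u, d⟫))] with t h1 h2
      linarith
    exact isCoboundedUnder_le_of_eventually_le _ hb
  -- main estimate
  have key : ∀ ε > (0:ℝ), ∀ᶠ t in 𝓝[>] (0:ℝ), F t ≤ -c + ε := by
    intro ε hε
    have hall : ∀ᶠ t in 𝓝[>] (0:ℝ), ∀ j : Fin N,
        (f j (u + t • d) - f j u) / t < ⟪gradient (f j) u, d⟫ + ε := by
      rw [Filter.eventually_all]
      intro j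
      exact (dir_deriv_tendsto (f j) (hf j) u d).eventually
        (eventually_lt_nhds (by linarith))
    have hIoc : Set.Ioc (0:ℝ) 1 ∈ 𝓝[>] (0:ℝ) :=
      Ioc_mem_nhdsGT_of_mem (by constructor <;> norm_num)
    filter_upwards [hall, hIoc] with t hallt htIoc
    obtain ⟨ht0, ht1⟩ := htIoc
    rw [hF, div_le_iff₀ ht0]
    have hsup : Finset.univ.sup' Finset.univ_nonempty (fun j => f j (u + t • d)) ≤
        (-c + ε) * t + Φu := by
      apply Finset.sup'_le
      intro j _
      have h1 : f j (u + t • d) - f j u < (⟪gradient (f j) u, d⟫ + ε) * t :=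
        (div_lt_iff₀ ht0).mp (hallt j)
      have h2 : f j u + ⟪gradient (f j) u, d⟫ ≤ Φu - c := by
        have := Finset.le_sup' (fun j => f j u + ⟪gradient (f j) u, d⟫)
          (Finset.mem_univ j)
        linarith
      have h3 : f j u ≤ Φu := Finset.le_sup' (fun j => f j u) (Finset.mem_univ j)
      nlinarith [mul_nonneg (sub_nonneg.mpr ht1) (sub_nonneg.mpr h3)]
    linarith
  have hle : ∀ ε > (0:ℝ), Filter.limsup F (𝓝[>] (0:ℝ)) ≤ -c + ε := fun ε hε =>
    limsup_le_of_le hcb (key ε hε)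
  have := le_of_forall_pos_le_add (fun ε hε => hle ε hε)
  exact this
end
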